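/- Let 𝔤 be the Lie algebra of Komrakov example 1.1² as above with 𝔪 = span{u₁,u₂,u₃,u₄} and Lorentzian form B = diag(1,1,1,-1) on 𝔪. Then there is no X ∈ 𝔤 with X_𝔪 ≠ 0 and B(X_𝔪, X_𝔪) = 0 satisfying B(X_𝔪, [Z,X]_𝔪) = 0 for all Z ∈ 𝔤. That is, this homogeneous space has no null absolutely homogeneous geodesics. -/

import Mathlib

/-!
`ad u₄` acts on `𝔪` as `-diag(1, 2, 1, 0)`, so `B(X, [u₄, X]) = -(x₁² + 2x₂² + x₃²)` is negative
definite off `span{u₄}`. Hence the condition with `Z = u₄` forces `X_𝔪 ∈ span{u₄}`, where the only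
null vector of the Lorentzian form is `0`.
-/

/-- The bracket of the Komrakov 1.1² Lie algebra on ℝ⁵ with basis
(e₁,u₁,u₂,u₃,u₄) = (coords 0,1,2,3,4). -/
def brK (x y : Fin 5 → ℝ) : Fin 5 → ℝ :=
  ![0,
    -(x 0 * y 3 - x 3 * y 0) - (x 4 * y 1 - x 1 * y 4),
    -(x 1 * y 3 - x 3 * y 1) - 2 * (x 4 * y 2 - x 2 * y 4),
    (x 0 * y 1 - x 1 * y 0) - (x 4 * y 3 - x 3 * y 4),
    0]

/-- The Lorentzian form B = diag(1,1,1,-1) on 𝔪 = span{u₁,u₂,u₃,u₄}, applied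
to the 𝔪-components (coordinates 1,…,4). -/
def BK (x y : Fin 5 → ℝ) : ℝ :=
  x 1 * y 1 + x 2 * y 2 + x 3 * y 3 - x 4 * y 4

lemma BK_brK_u₄ (X : Fin 5 → ℝ) :
    BK X (brK ![0, 0, 0, 0, 1] X) = -(X 1 ^ 2 + 2 * X 2 ^ 2 + X 3 ^ 2) := by
  simp only [BK, brK, Matrix.cons_val, Matrix.cons_val_zero, Matrix.cons_val_one]
  ring

lemma BK_self (X : Fin 5 → ℝ) : BK X X = X 1 ^ 2 + X 2 ^ 2 + X 3 ^ 2 - X 4 ^ 2 := by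
  simp only [BK]
  ring

/-- The Komrakov 1.1² homogeneous space has no null absolutely homogeneous
geodesics: there is no X with X_𝔪 ≠ 0, B(X_𝔪,X_𝔪) = 0 and
B(X_𝔪, [Z,X]_𝔪) = 0 for all Z. -/
theorem stmt14 :
    ¬ ∃ X : Fin 5 → ℝ,
      (¬ (X 1 = 0 ∧ X 2 = 0 ∧ X 3 = 0 ∧ X 4 = 0)) ∧
      BK X X = 0 ∧
      (∀ Z : Fin 5 → ℝ, BK X (brK Z X) = 0) := by
  rintro ⟨X, hne, hnull, hZ⟩
  have hu₄ := BK_brK_u₄ X ▸ hZ ![0, 0, 0, 0, 1]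
  rw [BK_self] at hnull
  have h₁ : X 1 = 0 := by nlinarith [sq_nonneg (X 1), sq_nonneg (X 2), sq_nonneg (X 3)]
  have h₂ : X 2 = 0 := by nlinarith [sq_nonneg (X 1), sq_nonneg (X 2), sq_nonneg (X 3)]
  have h₃ : X 3 = 0 := by nlinarith [sq_nonneg (X 1), sq_nonneg (X 2), sq_nonneg (X 3)]
  have h₄ : X 4 = 0 := by
    rw [h₁, h₂, h₃] at hnull
    nlinarith
  exact hne ⟨h₁, h₂, h₃, h₄⟩
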